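/- arXiv:1706.08039 — 2 statements merged into one kernel-verified Lean document; each statement's English description precedes it below -/
import Mathlib

section
/- For 0 < Re(μ) < Re(λ) and a > 0, the integral ∫₀^∞ x^(μ-1) (x + a + √(x² + 2ax))^(-λ) dx equals 2λ a^(-λ) (a/2)^μ Γ(2μ) Γ(λ-μ) / Γ(1+λ+μ). -/
/-! The substitution `v = a / (x + a + √(x² + 2ax))`, i.e. `x = a(1-v)²/(2v)`, maps `(0,1)` onto
`(0,∞)`, with `√(x² + 2ax) = a(1-v²)/(2v)`, `x + a + √(x² + 2ax) = a/v` and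
`|dx/dv| = a(1-v²)/(2v²)`. It turns the integral into
`(a/2)^μ a^(-λ) ∫₀¹ v^(λ-μ-1) (1-v)^(2μ-1) (1+v) dv = (a/2)^μ a^(-λ) (B(λ-μ, 2μ) + B(λ-μ+1, 2μ))`,
and the two beta integrals add up to `2λ Γ(λ-μ) Γ(2μ) / Γ(1+λ+μ)`. -/

open Complex MeasureTheory Real Set

namespace Complex

lemma ofReal_cpow_eq_exp {x : ℝ} (hx : 0 < x) (c : ℂ) :
    (x : ℂ) ^ c = cexp (Real.log x * c) := by
  rw [cpow_def_of_ne_zero (ofReal_ne_zero.2 hx.ne'), ofReal_log hx.le]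

lemma ofReal_eq_exp_log {x : ℝ} (hx : 0 < x) : (x : ℂ) = cexp (Real.log x) := by
  rw [ofReal_log hx.le, exp_log (ofReal_ne_zero.2 hx.ne')]

lemma setIntegral_Ioo_eq_betaIntegral (u w : ℂ) :
    ∫ v in Ioo (0 : ℝ) 1, (v : ℂ) ^ (u - 1) * (1 - (v : ℂ)) ^ (w - 1) = betaIntegral u w := by
  rw [betaIntegral, intervalIntegral.integral_of_le zero_le_one, integral_Ioc_eq_integral_Ioo]

lemma integrableOn_Ioo_betaIntegrand {u w : ℂ} (hu : 0 < u.re) (hw : 0 < w.re) :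
    IntegrableOn (fun v : ℝ => (v : ℂ) ^ (u - 1) * (1 - (v : ℂ)) ^ (w - 1)) (Ioo 0 1) :=
  ((intervalIntegrable_iff_integrableOn_Ioc_of_le zero_le_one).mp
    (betaIntegral_convergent hu hw)).mono_set Ioo_subset_Ioc_self

lemma setIntegral_Ioo_betaIntegrand_mul_one_add {u w : ℂ} (hu : 0 < u.re) (hw : 0 < w.re) :
    ∫ v in Ioo (0 : ℝ) 1, (v : ℂ) ^ (u - 1) * (1 - (v : ℂ)) ^ (w - 1) * (1 + v) =
      betaIntegral u w + betaIntegral (u + 1) w := by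
  have hsplit : ∀ v ∈ Ioo (0 : ℝ) 1,
      (v : ℂ) ^ (u - 1) * (1 - (v : ℂ)) ^ (w - 1) * (1 + v) =
        (v : ℂ) ^ (u - 1) * (1 - (v : ℂ)) ^ (w - 1) +
          (v : ℂ) ^ (u + 1 - 1) * (1 - (v : ℂ)) ^ (w - 1) := by
    intro v hv
    rw [add_sub_cancel_right, ← sub_add_cancel u 1, add_sub_cancel_right,
      cpow_add _ _ (ofReal_ne_zero.2 hv.1.ne'), cpow_one]
    ring
  have hu1 : 0 < (u + 1).re := by rw [add_re, one_re]; linarith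
  rw [setIntegral_congr_fun measurableSet_Ioo hsplit,
    integral_add (integrableOn_Ioo_betaIntegrand hu hw) (integrableOn_Ioo_betaIntegrand hu1 hw),
    setIntegral_Ioo_eq_betaIntegral, setIntegral_Ioo_eq_betaIntegral]

lemma betaIntegral_add_betaIntegral_add_one {u w : ℂ} (hu : 0 < u.re) (hw : 0 < w.re) :
    betaIntegral u w + betaIntegral (u + 1) w =
      (2 * u + w) * Gamma u * Gamma w / Gamma (u + w + 1) := by
  have huw : 0 < (u + w).re := by rw [add_re]; linarith
  have hu1 : 0 < (u + 1).re := by rw [add_re, one_re]; linarith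
  have hB := Gamma_mul_Gamma_eq_betaIntegral hu hw
  have hB1 := Gamma_mul_Gamma_eq_betaIntegral hu1 hw
  rw [Gamma_add_one u (ne_zero_of_re_pos hu), show u + 1 + w = u + w + 1 by ring,
    Gamma_add_one _ (ne_zero_of_re_pos huw)] at hB1
  rw [Gamma_add_one _ (ne_zero_of_re_pos huw),
    eq_div_iff (mul_ne_zero (ne_zero_of_re_pos huw) (Gamma_ne_zero_of_re_pos huw))]
  linear_combination -(u + w) * hB - hB1

end Complex

namespace Oberhettinger

noncomputable def subst (a v : ℝ) : ℝ := a * (1 - v) ^ 2 / (2 * v)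

lemma hasDerivAt_subst (a : ℝ) {v : ℝ} (hv : v ≠ 0) :
    HasDerivAt (subst a) (-(a * (1 - v ^ 2) / (2 * v ^ 2))) v := by
  have hnum : HasDerivAt (fun t => a * (1 - t) ^ 2) (a * (2 * (1 - v) * -1)) v := by
    simpa using (((hasDerivAt_id v).const_sub 1).pow 2).const_mul a
  have hden : HasDerivAt (fun t => 2 * t) 2 v := by simpa using (hasDerivAt_id v).const_mul 2
  refine (hnum.div hden (mul_ne_zero two_ne_zero hv)).congr_deriv ?_
  field_simp
  ring

lemma injOn_subst {a : ℝ} (ha : a ≠ 0) : InjOn (subst a) (Ioo 0 1) := by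
  rintro v ⟨hv0, hv1⟩ w ⟨hw0, hw1⟩ hvw
  have hprod : (w - v) * (1 - v * w) = 0 := by
    unfold subst at hvw
    field_simp at hvw
    linear_combination hvw
  rcases mul_eq_zero.mp hprod with h | h
  · linarith
  · nlinarith

lemma sqrt_subst {a v : ℝ} (ha : 0 ≤ a) (hv : v ∈ Ioo 0 1) :
    √(subst a v ^ 2 + 2 * a * subst a v) = a * (1 - v ^ 2) / (2 * v) := by
  obtain ⟨hv0, hv1⟩ := hv
  have hsq : subst a v ^ 2 + 2 * a * subst a v = (a * (1 - v ^ 2) / (2 * v)) ^ 2 := by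
    unfold subst
    field_simp
    ring
  rw [hsq, Real.sqrt_sq]
  have : 0 ≤ 1 - v ^ 2 := by nlinarith
  positivity

lemma subst_add_sqrt {a v : ℝ} (ha : 0 ≤ a) (hv : v ∈ Ioo 0 1) :
    subst a v + a + √(subst a v ^ 2 + 2 * a * subst a v) = a / v := by
  rw [sqrt_subst ha hv, subst]
  have : v ≠ 0 := hv.1.ne'
  field_simp
  ring

lemma subst_image_Ioo {a : ℝ} (ha : 0 < a) : subst a '' Ioo 0 1 = Ioi 0 := by
  refine Subset.antisymm ?_ fun x (hx : x ∈ Ioi 0) => ?_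
  · rintro _ ⟨v, ⟨hv0, hv1⟩, rfl⟩
    have : 0 < 1 - v := by linarith
    exact div_pos (mul_pos ha (pow_pos this 2)) (by linarith)
  · rw [mem_Ioi] at hx
    set s := √(x ^ 2 + 2 * a * x)
    have hs : s ^ 2 = x ^ 2 + 2 * a * x := Real.sq_sqrt (by positivity)
    have hxs : x < s := by nlinarith [Real.sqrt_nonneg (x ^ 2 + 2 * a * x)]
    have hsa : s < x + a := by nlinarith
    refine ⟨(x + a - s) / a, ⟨div_pos (by linarith) ha, (div_lt_one ha).2 (by linarith)⟩, ?_⟩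
    have : x + a - s ≠ 0 := by linarith
    rw [subst]
    field_simp
    nlinarith

theorem integral_Ioi_eq_integral_Ioo_subst {E : Type*} [NormedAddCommGroup E] [NormedSpace ℝ E]
    {a : ℝ} (ha : 0 < a) (f : ℝ → E) :
    ∫ x in Ioi 0, f x = ∫ v in Ioo 0 1, (a * (1 - v ^ 2) / (2 * v ^ 2)) • f (subst a v) := by
  rw [← subst_image_Ioo ha, integral_image_eq_integral_abs_deriv_smul measurableSet_Ioo
    (fun v hv => (hasDerivAt_subst a hv.1.ne').hasDerivWithinAt) (injOn_subst ha.ne')]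
  refine setIntegral_congr_fun measurableSet_Ioo fun v ⟨hv0, hv1⟩ => ?_
  have : 0 ≤ 1 - v ^ 2 := by nlinarith
  rw [abs_neg, abs_of_nonneg (by positivity)]

-- All bases are positive reals, so every power is `exp (log x * c)` and the identity reduces
-- to one between logarithms.
lemma jacobian_smul_integrand_subst (μ lam : ℂ) {a v : ℝ} (ha : 0 < a) (hv : v ∈ Ioo 0 1) :
    (a * (1 - v ^ 2) / (2 * v ^ 2)) • ((subst a v : ℂ) ^ (μ - 1) * ((a / v : ℝ) : ℂ) ^ (-lam)) =
      ((a / 2 : ℝ) : ℂ) ^ μ * (a : ℂ) ^ (-lam) *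
        ((v : ℂ) ^ (lam - μ - 1) * (1 - (v : ℂ)) ^ (2 * μ - 1) * (1 + v)) := by
  obtain ⟨hv0, hv1⟩ := hv
  have hm : 0 < 1 - v := by linarith
  have hp : 0 < 1 + v := by linarith
  have hsq : 1 - v ^ 2 = (1 - v) * (1 + v) := by ring
  have hlog_subst : Real.log (subst a v) =
      Real.log a + 2 * Real.log (1 - v) - Real.log 2 - Real.log v := by
    rw [subst, Real.log_div (by positivity) (by positivity), Real.log_mul ha.ne' (by positivity),
      Real.log_mul two_ne_zero hv0.ne', Real.log_pow]
    push_cast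
    ring
  have hlog_jac : Real.log (a * (1 - v ^ 2) / (2 * v ^ 2)) =
      Real.log a + Real.log (1 - v) + Real.log (1 + v) - Real.log 2 - 2 * Real.log v := by
    rw [hsq, Real.log_div (by positivity) (by positivity), Real.log_mul ha.ne' (by positivity),
      Real.log_mul hm.ne' hp.ne', Real.log_mul two_ne_zero (by positivity), Real.log_pow]
    push_cast
    ring
  have hsubst : 0 < subst a v := div_pos (mul_pos ha (pow_pos hm 2)) (by linarith)
  have hjac : 0 < a * (1 - v ^ 2) / (2 * v ^ 2) := by rw [hsq]; positivity
  rw [real_smul, show 1 - (v : ℂ) = ((1 - v : ℝ) : ℂ) by push_cast; rfl,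
    show 1 + (v : ℂ) = ((1 + v : ℝ) : ℂ) by push_cast; rfl,
    ofReal_eq_exp_log hjac, ofReal_eq_exp_log hp, ofReal_cpow_eq_exp hsubst,
    ofReal_cpow_eq_exp (div_pos ha hv0), ofReal_cpow_eq_exp (half_pos ha), ofReal_cpow_eq_exp ha,
    ofReal_cpow_eq_exp hv0, ofReal_cpow_eq_exp hm]
  simp only [← Complex.exp_add]
  congr 1
  rw [hlog_subst, hlog_jac, Real.log_div ha.ne' hv0.ne', Real.log_div ha.ne' two_ne_zero]
  push_cast
  ring

end Oberhettinger

theorem stmt2 (μ lam : ℂ) (hμ : 0 < μ.re) (h : μ.re < lam.re) (a : ℝ) (ha : 0 < a) :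
    ∫ x in Set.Ioi (0:ℝ),
        (x : ℂ) ^ (μ - 1) * ((x + a + Real.sqrt (x ^ 2 + 2 * a * x) : ℝ) : ℂ) ^ (-lam) =
    2 * lam * (a : ℂ) ^ (-lam) * ((a / 2 : ℝ) : ℂ) ^ μ *
      Complex.Gamma (2 * μ) * Complex.Gamma (lam - μ) / Complex.Gamma (1 + lam + μ) := by
  have hu : 0 < (lam - μ).re := by rw [sub_re]; linarith
  have hw : 0 < (2 * μ).re := by simpa using hμ
  rw [Oberhettinger.integral_Ioi_eq_integral_Ioo_subst ha,
    setIntegral_congr_fun measurableSet_Ioo fun v hv => by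
      rw [Oberhettinger.subst_add_sqrt ha.le hv,
        Oberhettinger.jacobian_smul_integrand_subst μ lam ha hv],
    integral_const_mul, setIntegral_Ioo_betaIntegrand_mul_one_add hu hw,
    betaIntegral_add_betaIntegral_add_one hu hw,
    show 2 * (lam - μ) + 2 * μ = 2 * lam by ring, show lam - μ + 2 * μ + 1 = 1 + lam + μ by ring]
  ring
end

section
/- The generalized multiindex Bessel function J(z) = Σ_{n=0}^∞ c^n (γ)_{κn} z^n / (∏_{j=1}^m Γ(α_j n + β_j + (b+1)/2) · n!) converges absolutely for every z ∈ ℂ, provided Σ_{j=1}^m Re(α_j) > max{0, κ-1}, κ > 0, Re(β_j) > 0 and Re(γ) > 0. -/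
/-!
The series is dominated by a real one. In the numerator `‖Γ(γ + κn)‖ ≤ Γ(Re γ + κn)`. For the
reciprocal gamma factors, the reflection formula and `‖sin u‖ ≤ ‖u‖ e^{|Im u|}` give
`‖1/Γ(w)‖ ≤ e^{π |Im w|} Γ(2 - Re w)` when `Re w < 2`, and the functional equation carries this
from the strip `1/2 ≤ Re w ≤ 3/2` to `‖1/Γ(w)‖ ≤ 4 e^{π |Im w|} / Γ(Re w)` when `Re w ≥ 1/2`.
Along `w = αⱼ n + βⱼ + (b + 1) / 2` the factors `e^{π |Im w|}` grow only geometrically, and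
log-convexity of the real gamma function shows that the ratio of consecutive terms of the real
majorant is `O(n ^ (κ - ∑ Re αⱼ - 1))`, which tends to `0`; the ratio test concludes.
-/

open Complex MeasureTheory Set Real Filter

namespace Real

theorem Gamma_le_two_of_mem_Icc {t : ℝ} (ht : t ∈ Icc (1 / 2 : ℝ) (3 / 2)) : Gamma t ≤ 2 := by
  have h32 : Gamma (3 / 2) = √π / 2 := by
    rw [show (3 / 2 : ℝ) = 1 / 2 + 1 by norm_num, Gamma_add_one (by norm_num), Gamma_one_half_eq]
    ring
  have hπ : √π ≤ 2 := sqrt_le_iff.2 ⟨zero_le_two, by linarith [pi_le_four]⟩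
  refine (convexOn_Gamma.le_max_of_mem_Icc (by norm_num) (by norm_num) ht).trans ?_
  rw [Gamma_one_half_eq, h32]
  exact max_le hπ (by linarith [sqrt_nonneg π])

theorem Gamma_add_le_Gamma_mul_rpow {u s : ℝ} (hu : 0 < u) (hs : 0 ≤ s) :
    Gamma (u + s) ≤ Gamma u * (u + s) ^ s := by
  rcases hs.eq_or_lt with rfl | hs
  · simp
  have hus : 0 < u + s := by linarith
  have hslope := convexOn_log_Gamma.slope_mono_adjacent (x := u) (y := u + s) (z := u + s + 1)
    hu (by simp; linarith) (by linarith) (by linarith)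
  simp only [Function.comp_apply, Gamma_add_one hus.ne', log_mul hus.ne' (Gamma_pos_of_pos hus).ne',
    add_sub_cancel_left, add_sub_cancel_left, div_one] at hslope
  rw [← log_le_log_iff (Gamma_pos_of_pos hus) (by positivity),
    log_mul (Gamma_pos_of_pos hu).ne' (by positivity), log_rpow hus]
  rw [div_le_iff₀ hs] at hslope
  linarith

theorem Gamma_mul_rpow_le_Gamma_add {u s : ℝ} (hu : 1 < u) (hs : 0 ≤ s) :
    Gamma u * (u - 1) ^ s ≤ Gamma (u + s) := by
  rcases hs.eq_or_lt with rfl | hs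
  · simp
  have hu1 : 0 < u - 1 := by linarith
  have hslope := convexOn_log_Gamma.slope_mono_adjacent (x := u - 1) (y := u) (z := u + s)
    hu1 (by simp; linarith) (by linarith) (by linarith)
  have hΓ : Gamma u = (u - 1) * Gamma (u - 1) := by simpa using Gamma_add_one hu1.ne'
  simp only [Function.comp_apply, hΓ, log_mul hu1.ne' (Gamma_pos_of_pos hu1).ne',
    sub_sub_cancel, add_sub_cancel_left, div_one] at hslope
  rw [← log_le_log_iff (by positivity) (Gamma_pos_of_pos (by linarith)), hΓ,
    log_mul (by positivity) (by positivity), log_mul hu1.ne' (Gamma_pos_of_pos hu1).ne',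
    log_rpow hu1]
  rw [le_div_iff₀ hs] at hslope
  linarith

theorem Gamma_add_mul_succ_le {p κ : ℝ} (hp : 0 < p) (hκ : 0 ≤ κ) (n : ℕ) :
    Gamma (p + κ * (n + 1 : ℕ)) ≤ (p + κ) ^ κ * ((n + 1 : ℕ) : ℝ) ^ κ * Gamma (p + κ * n) := by
  have hx : 0 < p + κ * n := by positivity
  calc Gamma (p + κ * (n + 1 : ℕ)) = Gamma (p + κ * n + κ) := by push_cast; ring_nf
    _ ≤ Gamma (p + κ * n) * (p + κ * n + κ) ^ κ := Gamma_add_le_Gamma_mul_rpow hx hκ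
    _ ≤ Gamma (p + κ * n) * ((p + κ) * ((n + 1 : ℕ) : ℝ)) ^ κ := by
        gcongr
        push_cast
        nlinarith [(Nat.cast_nonneg n : (0:ℝ) ≤ n)]
    _ = _ := by rw [mul_rpow (by positivity) (by positivity)]; ring

end Real

namespace Complex

theorem norm_Gamma_le_Gamma_re {w : ℂ} (hw : 0 < w.re) : ‖Gamma w‖ ≤ Real.Gamma w.re := by
  rw [Gamma_eq_integral hw, Real.Gamma_eq_integral hw, GammaIntegral]
  refine (norm_integral_le_integral_norm _).trans_eq (setIntegral_congr_fun measurableSet_Ioi ?_)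
  intro x hx
  simp [norm_cpow_eq_rpow_re_of_pos hx, -ofReal_exp]

theorem norm_cos_le_exp_abs_im (v : ℂ) : ‖cos v‖ ≤ Real.exp |v.im| := by
  rw [cos, norm_div, Complex.norm_two]
  refine div_le_of_le_mul₀ zero_le_two (Real.exp_pos _).le ((norm_add_le _ _).trans ?_)
  have h1 := Real.exp_le_exp.2 (neg_le_abs v.im)
  have h2 := Real.exp_le_exp.2 (le_abs_self v.im)
  simp only [norm_exp, mul_re, I_re, I_im, neg_re, neg_im, mul_zero, mul_one, zero_sub,
    sub_neg_eq_add, zero_add]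
  linarith

theorem norm_sin_le_mul_exp_abs_im (u : ℂ) : ‖sin u‖ ≤ ‖u‖ * Real.exp |u.im| := by
  have hs : Convex ℝ (im ⁻¹' Icc (-|u.im|) |u.im|) := (convex_Icc _ _).linear_preimage imLm
  have := hs.norm_image_sub_le_of_norm_deriv_le (f := sin) (fun _ _ => differentiableAt_sin)
    (fun v hv => (deriv_sin ▸ norm_cos_le_exp_abs_im v).trans (Real.exp_le_exp.2 (abs_le.2 hv)))
    (x := 0) (y := u) (by simp) (by simp [neg_abs_le, le_abs_self])
  simpa [mul_comm] using this

theorem norm_inv_Gamma_le_of_re_lt_two {w : ℂ} (hw : w.re < 2) :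
    ‖(Gamma w)⁻¹‖ ≤ Real.exp (π * |w.im|) * Real.Gamma (2 - w.re) := by
  have hG2 : 0 < Real.Gamma (2 - w.re) := Real.Gamma_pos_of_pos (by linarith)
  rcases eq_or_ne (Gamma w) 0 with h0 | h0
  · rw [h0, inv_zero, norm_zero]; positivity
  rcases eq_or_ne w 1 with rfl | h1
  · norm_num [Real.Gamma_one]
  have h1' : 1 - w ≠ 0 := sub_ne_zero.2 h1.symm
  -- otherwise reflection forces `Γ(1 - w) = 0`, i.e. `w` is an integer `≥ 2`
  have hsin : sin (π * w) ≠ 0 := by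
    intro hs
    obtain ⟨m, hm⟩ := (Gamma_eq_zero_iff _).1 <| by
      simpa [hs, h0] using Gamma_mul_Gamma_one_sub w
    have hm0 : m ≠ 0 := by rintro rfl; simp [sub_eq_zero] at hm; exact h1 hm.symm
    have : w.re = 1 + m := by simpa using congrArg re (by linear_combination -hm : w = 1 + m)
    have : (1 : ℝ) ≤ m := by exact_mod_cast Nat.one_le_iff_ne_zero.2 hm0
    linarith
  -- Using `Γ(2 - w) = (1 - w) Γ(1 - w)` cancels the zero of `sin (π w)` at `w = 1`.
  have hrefl : Gamma w * Gamma (2 - w) * sin (π * w) = π * (1 - w) := by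
    rw [show 2 - w = (1 - w) + 1 by ring, Gamma_add_one _ h1', mul_left_comm,
      Gamma_mul_Gamma_one_sub, mul_assoc, div_mul_cancel₀ _ hsin, mul_comm]
  have hsin_le : ‖sin (π * w)‖ ≤ π * ‖1 - w‖ * Real.exp (π * |w.im|) := by
    rw [← sin_pi_sub, ← mul_one_sub]
    refine (norm_sin_le_mul_exp_abs_im _).trans_eq ?_
    simp [abs_mul, abs_of_pos pi_pos]
  have hpos : 0 < π * ‖1 - w‖ := by positivity
  have key : π * ‖1 - w‖ ≤
      π * ‖1 - w‖ * (Real.exp (π * |w.im|) * Real.Gamma (2 - w.re) * ‖Gamma w‖) := by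
    calc π * ‖1 - w‖ = ‖Gamma w‖ * ‖Gamma (2 - w)‖ * ‖sin (π * w)‖ := by
          rw [← norm_mul, ← norm_mul, hrefl, norm_mul, norm_real, Real.norm_of_nonneg pi_pos.le]
      _ ≤ ‖Gamma w‖ * Real.Gamma (2 - w.re) * (π * ‖1 - w‖ * Real.exp (π * |w.im|)) := by
          gcongr
          simpa using norm_Gamma_le_Gamma_re (w := 2 - w) (by simpa using hw)
      _ = _ := by ring
  rw [norm_inv, inv_le_iff_one_le_mul₀ (norm_pos_iff.2 h0)]
  exact (le_mul_iff_one_le_right hpos).1 key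

theorem norm_inv_Gamma_mul_Gamma_re_le_sub_one {w : ℂ} (hw : 1 < w.re) :
    ‖(Gamma w)⁻¹‖ * Real.Gamma w.re ≤ ‖(Gamma (w - 1))⁻¹‖ * Real.Gamma (w.re - 1) := by
  have hx0 : 0 < w.re - 1 := by linarith
  have hw' : w - 1 ≠ 0 := fun h => by simp [sub_eq_zero.1 h] at hw
  have hΓ : Gamma w = (w - 1) * Gamma (w - 1) := by simpa using Gamma_add_one _ hw'
  have hΓre : Real.Gamma w.re = (w.re - 1) * Real.Gamma (w.re - 1) := by
    simpa using Real.Gamma_add_one hx0.ne'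
  have hx : (w.re - 1) / ‖w - 1‖ ≤ 1 :=
    div_le_one_of_le₀ (by simpa using re_le_norm (w - 1)) (norm_nonneg _)
  calc ‖(Gamma w)⁻¹‖ * Real.Gamma w.re
      = ‖(Gamma (w - 1))⁻¹‖ * Real.Gamma (w.re - 1) * ((w.re - 1) / ‖w - 1‖) := by
        rw [hΓ, hΓre, mul_inv, norm_mul, norm_inv]
        ring
    _ ≤ ‖(Gamma (w - 1))⁻¹‖ * Real.Gamma (w.re - 1) := mul_le_of_le_one_right (by positivity) hx

theorem norm_inv_Gamma_mul_Gamma_re_le {w : ℂ} (hw : 1 / 2 ≤ w.re) :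
    ‖(Gamma w)⁻¹‖ * Real.Gamma w.re ≤ 4 * Real.exp (π * |w.im|) := by
  suffices ∀ n : ℕ, ∀ w : ℂ, 1 / 2 ≤ w.re → w.re ≤ n + 3 / 2 →
      ‖(Gamma w)⁻¹‖ * Real.Gamma w.re ≤ 4 * Real.exp (π * |w.im|) from
    this ⌈w.re⌉₊ w hw (by linarith [Nat.le_ceil w.re])
  intro n
  induction n with
  | zero =>
    intro w hw1 hw2
    have hG : Real.Gamma w.re * Real.Gamma (2 - w.re) ≤ 2 * 2 := by
      push_cast at hw2
      exact mul_le_mul (Real.Gamma_le_two_of_mem_Icc ⟨hw1, by linarith⟩)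
        (Real.Gamma_le_two_of_mem_Icc ⟨by linarith, by linarith⟩)
        (Real.Gamma_pos_of_pos (by linarith)).le zero_le_two
    calc ‖(Gamma w)⁻¹‖ * Real.Gamma w.re
        ≤ Real.exp (π * |w.im|) * Real.Gamma (2 - w.re) * Real.Gamma w.re := by
          gcongr
          exact norm_inv_Gamma_le_of_re_lt_two (by linarith)
      _ ≤ 4 * Real.exp (π * |w.im|) := by nlinarith [Real.exp_pos (π * |w.im|)]
  | succ n ih =>
    intro w hw1 hw2
    rcases le_or_gt w.re (n + 3 / 2) with hle | hlt
    · exact ih w hw1 hle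
    refine (norm_inv_Gamma_mul_Gamma_re_le_sub_one (by linarith)).trans ?_
    simpa using ih (w - 1) (by simp; linarith) (by simp; push_cast at hw2; linarith)

end Complex

noncomputable def gammaProfile (x : ℝ) : ℝ :=
  if 1 ≤ x then Real.Gamma x else (Real.Gamma (2 - x))⁻¹

theorem gammaProfile_pos (x : ℝ) : 0 < gammaProfile x := by
  unfold gammaProfile
  split_ifs with h
  · exact Real.Gamma_pos_of_pos (by linarith)
  · exact inv_pos.2 (Real.Gamma_pos_of_pos (by linarith))

namespace Complex

theorem norm_inv_Gamma_le_gammaProfile (w : ℂ) :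
    ‖(Gamma w)⁻¹‖ ≤ 4 * Real.exp (π * |w.im|) / gammaProfile w.re := by
  unfold gammaProfile
  split_ifs with h
  · rw [le_div_iff₀ (Real.Gamma_pos_of_pos (by linarith))]
    exact norm_inv_Gamma_mul_Gamma_re_le (by linarith)
  · rw [div_inv_eq_mul]
    refine (norm_inv_Gamma_le_of_re_lt_two (by linarith)).trans ?_
    have := Real.Gamma_pos_of_pos (by linarith : 0 < 2 - w.re)
    nlinarith [Real.exp_pos (π * |w.im|)]

theorem norm_inv_Gamma_mul_natCast_add_le (a d : ℂ) (n : ℕ) :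
    ‖(Gamma (a * n + d))⁻¹‖ ≤
      4 * Real.exp (π * |d.im|) * Real.exp (π * |a.im|) ^ n / gammaProfile (a.re * n + d.re) := by
  refine (norm_inv_Gamma_le_gammaProfile _).trans ?_
  have hre : (a * n + d).re = a.re * n + d.re := by simp
  have him : (a * n + d).im = a.im * n + d.im := by simp
  rw [hre, him, mul_assoc 4, ← Real.exp_nat_mul, ← Real.exp_add]
  have := gammaProfile_pos (a.re * n + d.re)
  gcongr
  calc π * |a.im * n + d.im| ≤ π * (|a.im| * n + |d.im|) := by
        gcongr
        exact (abs_add_le _ _).trans_eq (by rw [abs_mul, Nat.abs_cast])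
    _ = _ := by ring

end Complex

theorem eventually_le_natCast_mul {r : ℝ} (hr : 0 < r) (c : ℝ) : ∀ᶠ n : ℕ in atTop, c ≤ r * n :=
  (tendsto_natCast_atTop_atTop.const_mul_atTop hr).eventually_ge_atTop c

theorem eventually_rpow_mul_gammaProfile_le_of_pos {a : ℝ} (ha : 0 < a) (d : ℝ) :
    ∀ᶠ n : ℕ in atTop, (a / 2) ^ a * ((n + 1 : ℕ) : ℝ) ^ a * gammaProfile (a * n + d) ≤
      gammaProfile (a * (n + 1 : ℕ) + d) := by
  filter_upwards [eventually_le_natCast_mul ha (2 - d),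
    eventually_le_natCast_mul (half_pos ha) (1 + a / 2 - d)] with n h2 hhalf
  have hx : 1 ≤ a * n + d := by linarith
  rw [gammaProfile, if_pos hx, gammaProfile, if_pos (by push_cast; nlinarith),
    show a * ((n + 1 : ℕ) : ℝ) + d = a * n + d + a by push_cast; ring,
    ← Real.mul_rpow (by positivity) (by positivity), mul_comm]
  refine le_trans ?_ (Real.Gamma_mul_rpow_le_Gamma_add (by linarith) ha.le)
  gcongr
  push_cast; linarith

theorem eventually_rpow_mul_gammaProfile_le_of_neg {a : ℝ} (ha : a < 0) (d : ℝ) :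
    ∀ᶠ n : ℕ in atTop, (2 + |d| - a) ^ a * ((n + 1 : ℕ) : ℝ) ^ a * gammaProfile (a * n + d) ≤
      gammaProfile (a * (n + 1 : ℕ) + d) := by
  filter_upwards [eventually_le_natCast_mul (neg_pos.2 ha) d] with n hn
  set u := 2 - (a * n + d) with hu
  have hu1 : 1 < u := by linarith
  have hus : u + -a = 2 - (a * ((n + 1 : ℕ) : ℝ) + d) := by push_cast; ring
  rw [gammaProfile, if_neg (by linarith), gammaProfile, if_neg (by push_cast; linarith), ← hu,
    ← hus, ← Real.mul_rpow (by linarith [abs_nonneg d]) (by positivity), mul_comm]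
  have hΓ := Real.Gamma_add_le_Gamma_mul_rpow (by linarith : 0 < u) (neg_pos.2 ha).le
  have hpos : 0 < u + -a := by linarith
  calc (Real.Gamma u)⁻¹ * ((2 + |d| - a) * ((n + 1 : ℕ) : ℝ)) ^ a
      ≤ (Real.Gamma u)⁻¹ * (u + -a) ^ a := by
        gcongr ?_ * ?_
        refine Real.rpow_le_rpow_of_nonpos hpos ?_ ha.le
        push_cast
        have : 0 ≤ (2 + |d|) * n := by positivity
        linarith [neg_abs_le d]
    _ = ((u + -a) ^ (-a))⁻¹ * (Real.Gamma u)⁻¹ := by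
        rw [Real.rpow_neg hpos.le, inv_inv, mul_comm]
    _ ≤ (Real.Gamma (u + -a))⁻¹ := by
        rw [← mul_inv, mul_comm]
        exact inv_anti₀ (Real.Gamma_pos_of_pos hpos) hΓ

theorem exists_rpow_mul_gammaProfile_le (a d : ℝ) : ∃ C > 0, ∀ᶠ n : ℕ in atTop,
    C * ((n + 1 : ℕ) : ℝ) ^ a * gammaProfile (a * n + d) ≤ gammaProfile (a * (n + 1 : ℕ) + d) := by
  rcases lt_trichotomy a 0 with ha | rfl | ha
  · exact ⟨_, Real.rpow_pos_of_pos (by linarith [abs_nonneg d]) a,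
      eventually_rpow_mul_gammaProfile_le_of_neg ha d⟩
  · exact ⟨1, one_pos, by simp⟩
  · exact ⟨_, Real.rpow_pos_of_pos (half_pos ha) a, eventually_rpow_mul_gammaProfile_le_of_pos ha d⟩

theorem exists_rpow_mul_prod_gammaProfile_le {ι : Type*} [Fintype ι] (a d : ι → ℝ) :
    ∃ C > 0, ∀ᶠ n : ℕ in atTop,
      C * ((n + 1 : ℕ) : ℝ) ^ (∑ j, a j) * ∏ j, gammaProfile (a j * n + d j) ≤
        ∏ j, gammaProfile (a j * (n + 1 : ℕ) + d j) := by
  choose C hC h using fun j => exists_rpow_mul_gammaProfile_le (a j) (d j)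
  refine ⟨∏ j, C j, Finset.prod_pos fun j _ => hC j, ?_⟩
  filter_upwards [eventually_all.2 h] with n hn
  rw [Real.rpow_sum_of_pos (by positivity), ← Finset.prod_mul_distrib, ← Finset.prod_mul_distrib]
  refine Finset.prod_le_prod (fun j _ => ?_) fun j _ => hn j
  have := hC j
  have := gammaProfile_pos (a j * n + d j)
  positivity

theorem summable_of_eventually_le_rpow_mul {f : ℕ → ℝ} {C e : ℝ} (he : e < 0)
    (hf : ∀ᶠ n in atTop, 0 ≤ f n) (h : ∀ᶠ n in atTop, f (n + 1) ≤ C * ((n + 1 : ℕ) : ℝ) ^ e * f n) :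
    Summable f := by
  have hlim : Tendsto (fun n : ℕ => C * ((n + 1 : ℕ) : ℝ) ^ e) atTop (nhds 0) := by
    simpa using ((tendsto_rpow_neg_atTop (neg_pos.2 he)).comp
      (tendsto_natCast_atTop_atTop.comp (tendsto_add_atTop_nat 1))).const_mul C
  refine summable_of_ratio_norm_eventually_le (r := 1 / 2) (by norm_num) ?_
  filter_upwards [hf, (tendsto_add_atTop_nat 1).eventually hf, h,
    hlim.eventually (gt_mem_nhds one_half_pos)] with n hn hn1 hle hsmall
  rw [Real.norm_of_nonneg hn, Real.norm_of_nonneg hn1]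
  exact hle.trans (mul_le_mul_of_nonneg_right hsmall.le hn)

open Nat in
theorem summable_pow_mul_Gamma_div_prod_gammaProfile {ι : Type*} [Fintype ι] {R p κ : ℝ}
    (hR : 0 ≤ R) (hp : 0 < p) (hκ : 0 ≤ κ) (a d : ι → ℝ) (h : κ - 1 < ∑ j, a j) :
    Summable fun n : ℕ =>
      R ^ n * Real.Gamma (p + κ * n) / ((∏ j, gammaProfile (a j * n + d j)) * n !) := by
  obtain ⟨C, hC, hgrow⟩ := exists_rpow_mul_prod_gammaProfile_le a d
  have hP : ∀ n : ℕ, 0 < ∏ j, gammaProfile (a j * n + d j) := fun n =>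
    Finset.prod_pos fun j _ => gammaProfile_pos _
  have hΓ : ∀ n : ℕ, 0 < Real.Gamma (p + κ * n) := fun n => Real.Gamma_pos_of_pos (by positivity)
  refine summable_of_eventually_le_rpow_mul (C := R * (p + κ) ^ κ / C) (e := κ - ∑ j, a j - 1)
    (by linarith) (Eventually.of_forall fun n => by have := hP n; have := hΓ n; positivity) ?_
  filter_upwards [hgrow] with n hn
  set S := ∑ j, a j
  set N : ℝ := ((n + 1 : ℕ) : ℝ)
  have hN : 0 < N := by positivity
  have hden : C * N ^ S * (∏ j, gammaProfile (a j * n + d j)) * (N * n !) ≤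
      (∏ j, gammaProfile (a j * (n + 1 : ℕ) + d j)) * (n + 1)! := by
    rw [factorial_succ, cast_mul]
    gcongr
  calc R ^ (n + 1) * Real.Gamma (p + κ * (n + 1 : ℕ)) /
        ((∏ j, gammaProfile (a j * (n + 1 : ℕ) + d j)) * (n + 1)!)
      ≤ R ^ n * R * ((p + κ) ^ κ * N ^ κ * Real.Gamma (p + κ * n)) /
        (C * N ^ S * (∏ j, gammaProfile (a j * n + d j)) * (N * n !)) := by
        rw [pow_succ]
        have := hP n
        gcongr
        exact Real.Gamma_add_mul_succ_le hp hκ n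
    _ = R * (p + κ) ^ κ / C * N ^ (κ - S - 1) *
        (R ^ n * Real.Gamma (p + κ * n) / ((∏ j, gammaProfile (a j * n + d j)) * n !)) := by
        rw [Real.rpow_sub hN, Real.rpow_sub hN, Real.rpow_one]
        have := hP n
        field_simp

open Nat in
theorem norm_multiindexBessel_term_le {ι : Type*} [Fintype ι] (α D : ι → ℂ) (γ c z : ℂ) {κ : ℝ}
    (hκ : 0 ≤ κ) (hγ : 0 < γ.re) (n : ℕ) :
    ‖c ^ n * (Complex.Gamma (γ + (κ * n : ℝ)) / Complex.Gamma γ) * z ^ n /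
        ((∏ j, Complex.Gamma (α j * n + D j)) * (n ! : ℂ))‖ ≤
      (∏ j, 4 * Real.exp (π * |(D j).im|)) / ‖Complex.Gamma γ‖ *
        ((‖c‖ * ‖z‖ * ∏ j, Real.exp (π * |(α j).im|)) ^ n * Real.Gamma (γ.re + κ * n) /
          ((∏ j, gammaProfile ((α j).re * n + (D j).re)) * n !)) := by
  have hnum : ‖Complex.Gamma (γ + (κ * n : ℝ))‖ ≤ Real.Gamma (γ.re + κ * n) := by
    simpa using Complex.norm_Gamma_le_Gamma_re (w := γ + (κ * n : ℝ)) (by simp; positivity)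
  have hden : ∏ j, ‖(Complex.Gamma (α j * n + D j))⁻¹‖ ≤
      ∏ j, 4 * Real.exp (π * |(D j).im|) * Real.exp (π * |(α j).im|) ^ n /
        gammaProfile ((α j).re * n + (D j).re) :=
    Finset.prod_le_prod (fun j _ => norm_nonneg _)
      fun j _ => Complex.norm_inv_Gamma_mul_natCast_add_le (α j) (D j) n
  have hP : 0 < ∏ j, gammaProfile ((α j).re * n + (D j).re) :=
    Finset.prod_pos fun j _ => gammaProfile_pos _
  have hΓγ : 0 < ‖Complex.Gamma γ‖ := norm_pos_iff.2 (Complex.Gamma_ne_zero_of_re_pos hγ)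
  calc _ = ‖c‖ ^ n * ‖z‖ ^ n * ‖Complex.Gamma (γ + (κ * n : ℝ))‖ / ‖Complex.Gamma γ‖ *
        (∏ j, ‖(Complex.Gamma (α j * n + D j))⁻¹‖) / n ! := by
        simp only [norm_div, norm_mul, norm_pow, norm_prod, norm_inv, Complex.norm_natCast,
          Finset.prod_inv_distrib]
        ring
    _ ≤ ‖c‖ ^ n * ‖z‖ ^ n * Real.Gamma (γ.re + κ * n) / ‖Complex.Gamma γ‖ *
        (∏ j, 4 * Real.exp (π * |(D j).im|) * Real.exp (π * |(α j).im|) ^ n /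
          gammaProfile ((α j).re * n + (D j).re)) / n ! := by gcongr
    _ = _ := by
        rw [Finset.prod_div_distrib, Finset.prod_mul_distrib, Finset.prod_pow]
        field_simp
        ring

theorem stmt13_general (m : ℕ) (α β : Fin m → ℂ) (γ b c : ℂ) (κ : ℝ) (hκ : 0 < κ)
    (hα : max 0 (κ - 1) < ∑ j, (α j).re) (hγ : 0 < γ.re)
    (z : ℂ) :
    Summable (fun n : ℕ =>
      ‖c ^ n * (Complex.Gamma (γ + (κ * n : ℝ)) / Complex.Gamma γ) * z ^ n /
        ((∏ j, Complex.Gamma (α j * n + β j + (b + 1) / 2)) * (n.factorial : ℂ))‖) := by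
  set D : Fin m → ℂ := fun j => β j + (b + 1) / 2
  have hsum := summable_pow_mul_Gamma_div_prod_gammaProfile (by positivity) hγ hκ.le
    (fun j => (α j).re) (fun j => (D j).re) (lt_of_le_of_lt (le_max_right _ _) hα)
    (R := ‖c‖ * ‖z‖ * ∏ j, Real.exp (π * |(α j).im|))
  refine .of_nonneg_of_le (fun n => norm_nonneg _) (fun n => ?_) (hsum.mul_left
    ((∏ j, 4 * Real.exp (π * |(D j).im|)) / ‖Complex.Gamma γ‖))
  simpa only [D, ← add_assoc] using norm_multiindexBessel_term_le α D γ c z hκ.le hγ n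

theorem stmt13 (m : ℕ) (α β : Fin m → ℂ) (γ b c : ℂ) (κ : ℝ) (hκ : 0 < κ)
    (hα : max 0 (κ - 1) < ∑ j, (α j).re) (hβ : ∀ j, 0 < (β j).re) (hγ : 0 < γ.re)
    (z : ℂ) :
    Summable (fun n : ℕ =>
      ‖c ^ n * (Complex.Gamma (γ + (κ * n : ℝ)) / Complex.Gamma γ) * z ^ n /
        ((∏ j, Complex.Gamma (α j * n + β j + (b + 1) / 2)) * (n.factorial : ℂ))‖) :=
  stmt13_general m α β γ b c κ hκ hα hγ z
end
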